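/- Suppose ℓ satisfies the Metric Loss Assumption and the Gradual Shift assumption GS(a, b, ε, s) holds for a measurable classifier f ∈ H. If R_p(f) < b, then f witnesses the Close Conditionals assumption CC(κ) with κ = b + ε · (a/2) · s · (s + 1); in particular, max_{y ∈ Y} W_{1,ℓ}(f#p_{x|y}(·|y), f#q_{x|y}(·|y)) < ε · (a/2) · s · (s + 1). -/

import Mathlib

open MeasureTheory ProbabilityTheory

/-- A coupling of `μ` and `ν`: a joint measure on the product with the given marginals. -/
def IsCoupling {A B : Type*} [MeasurableSpace A] [MeasurableSpace B]
    (γ : Measure (A × B)) (μ : Measure A) (ν : Measure B) : Prop :=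
  γ.map Prod.fst = μ ∧ γ.map Prod.snd = ν

/-- The `α`-Wasserstein distance between `μ` and `ν` with cost function `c`:
`W_{α,c}(μ,ν) = (inf_{γ ∈ Γ(μ,ν)} ∫ c^α dγ)^{1/α}`. -/
noncomputable def Wass {A B : Type*} [MeasurableSpace A] [MeasurableSpace B]
    (α : ℝ) (c : A × B → ℝ) (μ : Measure A) (ν : Measure B) : ℝ :=
  sInf { r | ∃ γ : Measure (A × B), IsCoupling γ μ ν ∧ r = ∫ z, c z ^ α ∂γ } ^ (1 / α)

/-- The 1-Wasserstein distance between `μ` and `ν` with cost function `c`. -/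
noncomputable def W1 {A B : Type*} [MeasurableSpace A] [MeasurableSpace B]
    (c : A × B → ℝ) (μ : Measure A) (ν : Measure B) : ℝ :=
  sInf { r | ∃ γ : Measure (A × B), IsCoupling γ μ ν ∧ r = ∫ z, c z ∂γ }

/-- The risk of classifier `f` under joint distribution `p`, w.r.t. loss `ℓ`. -/
noncomputable def risk {X Y : Type*} [MeasurableSpace X] [MeasurableSpace Y]
    (ℓ : Y × Y → ℝ) (f : X → Y) (p : Measure (X × Y)) : ℝ :=
  ∫ z, ℓ (f z.1, z.2) ∂p

/-- `f#p` : pushforward of a joint measure `p` under `(x, y) ↦ (f x, y)`. -/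
noncomputable def jmap {X Y : Type*} [MeasurableSpace X] [MeasurableSpace Y]
    (f : X → Y) (p : Measure (X × Y)) : Measure (Y × Y) :=
  p.map (fun z => (f z.1, z.2))

instance jmap.instIsFiniteMeasure {X Y : Type*} [MeasurableSpace X] [MeasurableSpace Y]
    (f : X → Y) (p : Measure (X × Y)) [IsFiniteMeasure p] : IsFiniteMeasure (jmap f p) := by
  unfold jmap; infer_instance

/-!
Along the chain `p_{x|y} = q⁽⁰⁾, q⁽¹⁾, …, q⁽ˢ⁾` consecutive pushforwards are `ε`-close in `W₁`.
On the finite label space couplings can be glued along a common marginal, and the metric `ℓ`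
makes the glued cost subadditive, so `W₁(f#q⁽⁰⁾, f#q⁽ⁱ⁾) < i ε`. Mixing these couplings with the
weights `rᵢ ≤ a` couples `f#p_{x|y}` with `f#q_{x|y}` at cost `< Σ rᵢ i ε ≤ a ε s (s + 1) / 2`.
-/

lemma MeasureTheory.Measure.map_compProd_prodMkLeft {α β γ : Type*} [MeasurableSpace α]
    [MeasurableSpace β] [MeasurableSpace γ] (μ : Measure (α × β)) [SFinite μ]
    (κ : Kernel β γ) [IsSFiniteKernel κ] :
    (μ ⊗ₘ κ.prodMkLeft α).map (fun t => (t.1.2, t.2)) = μ.snd ⊗ₘ κ := by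
  ext s hs
  rw [Measure.map_apply (by fun_prop) hs, Measure.compProd_apply (hs.preimage (by fun_prop)),
    Measure.compProd_apply hs, Measure.snd,
    lintegral_map (Kernel.measurable_kernel_prodMk_left hs) measurable_snd]
  rfl

section Coupling

variable {A B : Type*} [MeasurableSpace A] [MeasurableSpace B]

lemma IsCoupling.isProbabilityMeasure {γ : Measure (A × B)} {μ : Measure A} {ν : Measure B}
    [IsProbabilityMeasure μ] (h : IsCoupling γ μ ν) : IsProbabilityMeasure γ := by
  have : IsProbabilityMeasure (γ.map Prod.fst) := by rw [h.1]; infer_instance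
  exact Measure.isProbabilityMeasure_of_map Prod.fst

lemma W1_nonneg {c : A × B → ℝ} (hc : ∀ z, 0 ≤ c z) (μ : Measure A) (ν : Measure B) :
    0 ≤ W1 c μ ν := by
  apply Real.sInf_nonneg
  rintro r ⟨γ, -, rfl⟩
  exact integral_nonneg hc

lemma W1_le_integral {c : A × B → ℝ} (hc : ∀ z, 0 ≤ c z) {μ : Measure A} {ν : Measure B}
    {γ : Measure (A × B)} (hγ : IsCoupling γ μ ν) : W1 c μ ν ≤ ∫ z, c z ∂γ := by
  refine csInf_le ⟨0, ?_⟩ ⟨γ, hγ, rfl⟩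
  rintro r ⟨γ', -, rfl⟩
  exact integral_nonneg hc

lemma exists_isCoupling_integral_lt_of_W1_lt {c : A × B → ℝ} {μ : Measure A} {ν : Measure B}
    [IsProbabilityMeasure μ] [IsProbabilityMeasure ν] {e : ℝ} (h : W1 c μ ν < e) :
    ∃ γ, IsCoupling γ μ ν ∧ ∫ z, c z ∂γ < e := by
  have hne : {r | ∃ γ, IsCoupling γ μ ν ∧ r = ∫ z, c z ∂γ}.Nonempty :=
    ⟨_, μ.prod ν, ⟨Measure.fst_prod, Measure.snd_prod⟩, rfl⟩
  obtain ⟨-, ⟨γ, hγ, rfl⟩, hlt⟩ := exists_lt_of_csInf_lt hne h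
  exact ⟨γ, hγ, hlt⟩

end Coupling

section FiniteSpace

variable {α : Type*} [MeasurableSpace α] [Finite α] [MeasurableSingletonClass α]
  {ℓ : α × α → ℝ}

lemma IsCoupling.exists_integral_le_add [Nonempty α]
    (htri : ∀ x y z, ℓ (x, z) ≤ ℓ (x, y) + ℓ (y, z))
    {μ ν ρ : Measure α} {γ₁ γ₂ : Measure (α × α)} [IsFiniteMeasure γ₁] [IsFiniteMeasure γ₂]
    (h₁ : IsCoupling γ₁ μ ν) (h₂ : IsCoupling γ₂ ν ρ) :
    ∃ γ, IsCoupling γ μ ρ ∧ ∫ z, ℓ z ∂γ ≤ ∫ z, ℓ z ∂γ₁ + ∫ z, ℓ z ∂γ₂ := by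
  -- draw `(x, y) ∼ γ₁`, then `z` from the conditional law of `γ₂` given its first coordinate `y`
  set η := γ₁ ⊗ₘ γ₂.condKernel.prodMkLeft α
  have hη₁ : η.map Prod.fst = γ₁ := Measure.fst_compProd _ _
  have hη₂ : η.map (fun t => (t.1.2, t.2)) = γ₂ := by
    rw [Measure.map_compProd_prodMkLeft, Measure.snd, h₁.2, ← h₂.1]
    exact γ₂.disintegrate _
  refine ⟨η.map (fun t => (t.1.1, t.2)), ⟨?_, ?_⟩, ?_⟩
  · rw [Measure.map_map measurable_fst (by fun_prop), ← h₁.1, ← hη₁,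
      Measure.map_map measurable_fst measurable_fst]
    rfl
  · rw [Measure.map_map measurable_snd (by fun_prop), ← h₂.2, ← hη₂,
      Measure.map_map measurable_snd (by fun_prop)]
    rfl
  · rw [integral_map (by fun_prop) (by fun_prop)]
    calc ∫ t, ℓ (t.1.1, t.2) ∂η ≤ ∫ t, (ℓ t.1 + ℓ (t.1.2, t.2)) ∂η :=
          integral_mono .of_finite .of_finite fun t => htri _ _ _
      _ = ∫ t, ℓ t.1 ∂η + ∫ t, ℓ (t.1.2, t.2) ∂η := integral_add .of_finite .of_finite
      _ = ∫ z, ℓ z ∂γ₁ + ∫ z, ℓ z ∂γ₂ := by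
          rw [← hη₂, ← hη₁, integral_map (by fun_prop) (by fun_prop),
            integral_map (by fun_prop) (by fun_prop)]

lemma W1_lt_add [Nonempty α] (hℓ : ∀ z, 0 ≤ ℓ z)
    (htri : ∀ x y z, ℓ (x, z) ≤ ℓ (x, y) + ℓ (y, z))
    {μ ν ρ : Measure α} [IsProbabilityMeasure μ] [IsProbabilityMeasure ν]
    [IsProbabilityMeasure ρ] {e₁ e₂ : ℝ}
    (h₁ : W1 ℓ μ ν < e₁) (h₂ : W1 ℓ ν ρ < e₂) : W1 ℓ μ ρ < e₁ + e₂ := by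
  obtain ⟨γ₁, hγ₁, hc₁⟩ := exists_isCoupling_integral_lt_of_W1_lt h₁
  obtain ⟨γ₂, hγ₂, hc₂⟩ := exists_isCoupling_integral_lt_of_W1_lt h₂
  have := hγ₁.isProbabilityMeasure
  have := hγ₂.isProbabilityMeasure
  obtain ⟨γ, hγ, hc⟩ := hγ₁.exists_integral_le_add htri hγ₂
  linarith [W1_le_integral hℓ hγ]

lemma W1_finset_sum_smul_lt {ι : Type*} (hℓ : ∀ z, 0 ≤ ℓ z) {t : Finset ι}
    {μ : Measure α} {ν : ι → Measure α} [IsProbabilityMeasure μ]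
    (hν : ∀ i ∈ t, IsProbabilityMeasure (ν i)) {w e : ι → ℝ} (hw : ∀ i ∈ t, 0 ≤ w i)
    (hw₁ : ∑ i ∈ t, w i = 1) (he : ∀ i ∈ t, W1 ℓ μ (ν i) < e i) :
    W1 ℓ μ (∑ i ∈ t, ENNReal.ofReal (w i) • ν i) < ∑ i ∈ t, w i * e i := by
  have hcoup : ∀ i ∈ t, ∃ γ, IsCoupling γ μ (ν i) ∧ ∫ z, ℓ z ∂γ < e i := fun i hi =>
    have := hν i hi
    exists_isCoupling_integral_lt_of_W1_lt (he i hi)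
  choose! γ hγ hcost using hcoup
  have hint : ∀ i ∈ t, Integrable ℓ (ENNReal.ofReal (w i) • γ i) := fun i hi =>
    have := (hγ i hi).isProbabilityMeasure
    Integrable.of_finite.smul_measure ENNReal.ofReal_ne_top
  have hmix : IsCoupling (∑ i ∈ t, ENNReal.ofReal (w i) • γ i) μ
      (∑ i ∈ t, ENNReal.ofReal (w i) • ν i) := by
    constructor
    · rw [Measure.map_finset_sum (by fun_prop), Finset.sum_congr rfl fun i hi => by
        rw [Measure.map_smul, (hγ i hi).1], ← Finset.sum_smul,
        ← ENNReal.ofReal_sum_of_nonneg hw, hw₁, ENNReal.ofReal_one, one_smul]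
    · rw [Measure.map_finset_sum (by fun_prop)]
      exact Finset.sum_congr rfl fun i hi => by rw [Measure.map_smul, (hγ i hi).2]
  obtain ⟨i₀, hi₀, hw₀⟩ : ∃ i ∈ t, 0 < w i :=
    Finset.exists_lt_of_sum_lt (by simp [hw₁] : ∑ i ∈ t, (0 : ℝ) < ∑ i ∈ t, w i)
  calc W1 ℓ μ (∑ i ∈ t, ENNReal.ofReal (w i) • ν i)
      ≤ ∫ z, ℓ z ∂(∑ i ∈ t, ENNReal.ofReal (w i) • γ i) := W1_le_integral hℓ hmix
    _ = ∑ i ∈ t, w i * ∫ z, ℓ z ∂(γ i) := by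
        rw [integral_finsetSum_measure hint]
        refine Finset.sum_congr rfl fun i hi => ?_
        rw [integral_smul_measure, ENNReal.toReal_ofReal (hw i hi), smul_eq_mul]
    _ < ∑ i ∈ t, w i * e i :=
        Finset.sum_lt_sum (fun i hi => mul_le_mul_of_nonneg_left (hcost i hi).le (hw i hi))
          ⟨i₀, hi₀, mul_lt_mul_of_pos_left (hcost i₀ hi₀) hw₀⟩

lemma W1_lt_mul_of_steps [Nonempty α] (hℓ : ∀ z, 0 ≤ ℓ z)
    (htri : ∀ x y z, ℓ (x, z) ≤ ℓ (x, y) + ℓ (y, z)) {s : ℕ} {ν : ℕ → Measure α}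
    (hν : ∀ i ≤ s, IsProbabilityMeasure (ν i)) {ε : ℝ}
    (hstep : ∀ i ∈ Finset.Icc 1 s, W1 ℓ (ν (i - 1)) (ν i) < ε) :
    ∀ i ∈ Finset.Icc 1 s, W1 ℓ (ν 0) (ν i) < i * ε := by
  intro i hi
  obtain ⟨hi₁, his⟩ := Finset.mem_Icc.mp hi
  induction i, hi₁ using Nat.le_induction with
  | base => simpa using hstep 1 hi
  | succ i hi₁ ih =>
    have := hν 0 (Nat.zero_le s)
    have := hν i (by omega)
    have := hν (i + 1) his
    rw [Nat.cast_succ, add_one_mul]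
    exact W1_lt_add hℓ htri (ih (Finset.mem_Icc.mpr ⟨hi₁, by omega⟩) (by omega)) (hstep _ hi)

lemma sum_Icc_one_natCast_mul_two (s : ℕ) :
    (∑ i ∈ Finset.Icc 1 s, (i : ℝ)) * 2 = s * (s + 1) := by
  induction s with
  | zero => simp
  | succ n ih =>
    rw [Finset.sum_Icc_succ_top (by omega), add_mul, ih]
    push_cast
    ring

lemma W1_lt_of_gradualShift [Nonempty α] (hℓ : ∀ z, 0 ≤ ℓ z)
    (htri : ∀ x y z, ℓ (x, z) ≤ ℓ (x, y) + ℓ (y, z)) {s : ℕ} {ν : ℕ → Measure α}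
    (hν : ∀ i ≤ s, IsProbabilityMeasure (ν i)) {a ε : ℝ} {r : ℕ → ℝ}
    (hr : ∀ i ∈ Finset.Icc 1 s, 0 ≤ r i ∧ r i ≤ a) (hr₁ : ∑ i ∈ Finset.Icc 1 s, r i = 1)
    (hstep : ∀ i ∈ Finset.Icc 1 s, W1 ℓ (ν (i - 1)) (ν i) < ε) :
    W1 ℓ (ν 0) (∑ i ∈ Finset.Icc 1 s, ENNReal.ofReal (r i) • ν i) <
      ε * (a / 2) * s * (s + 1) := by
  have := hν 0 (Nat.zero_le s)
  have hone : 1 ∈ Finset.Icc 1 s :=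
    Finset.mem_Icc.mpr ⟨le_rfl, Nat.one_le_iff_ne_zero.mpr (by rintro rfl; simp at hr₁)⟩
  have hε : 0 ≤ ε := (W1_nonneg hℓ _ _).trans (hstep 1 hone).le
  calc W1 ℓ (ν 0) (∑ i ∈ Finset.Icc 1 s, ENNReal.ofReal (r i) • ν i)
      < ∑ i ∈ Finset.Icc 1 s, r i * (i * ε) :=
        W1_finset_sum_smul_lt hℓ (fun i hi => hν i (Finset.mem_Icc.mp hi).2)
          (fun i hi => (hr i hi).1) hr₁ (W1_lt_mul_of_steps hℓ htri hν hstep)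
    _ ≤ ∑ i ∈ Finset.Icc 1 s, a * (i * ε) :=
        Finset.sum_le_sum fun i hi => mul_le_mul_of_nonneg_right (hr i hi).2 (by positivity)
    _ = ε * (a / 2) * s * (s + 1) := by
        rw [← Finset.mul_sum, ← Finset.sum_mul]
        linear_combination (a * ε / 2) * sum_Icc_one_natCast_mul_two s

end FiniteSpace

theorem statement16_general {X Y : Type*} [MeasurableSpace X] [StandardBorelSpace X] [Nonempty X]
    [MeasurableSpace Y] [Fintype Y] [MeasurableSingletonClass Y] [Nonempty Y]
    (ℓ : Y × Y → ℝ)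
    (hnonneg : ∀ y y' : Y, 0 ≤ ℓ (y, y'))
    (htri : ∀ y₁ y₂ y₃ : Y, ℓ (y₁, y₃) ≤ ℓ (y₁, y₂) + ℓ (y₂, y₃))
    (p q : Measure (X × Y)) [IsProbabilityMeasure p] [IsProbabilityMeasure q]
    (f : X → Y) (hf : Measurable f)
    (a b ε : ℝ) (s : ℕ)
    (hGS : risk ℓ f p < b →
      ∃ (Q : ℕ → Y → Measure X) (r : ℕ → ℝ),
        (∀ y : Y, Q 0 y = (p.map Prod.swap).condKernel y) ∧
        (∀ i ∈ Finset.Icc 1 s, ∀ y : Y, IsProbabilityMeasure (Q i y)) ∧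
        (∀ i ∈ Finset.Icc 1 s, 0 ≤ r i ∧ r i ≤ a) ∧
        (∑ i ∈ Finset.Icc 1 s, r i = 1) ∧
        (∀ y : Y, (q.map Prod.swap).condKernel y =
          ∑ i ∈ Finset.Icc 1 s, ENNReal.ofReal (r i) • Q i y) ∧
        (∀ i ∈ Finset.Icc 1 s, ∀ y : Y,
          W1 ℓ ((Q (i - 1) y).map f) ((Q i y).map f) < ε))
    (hb : risk ℓ f p < b) :
    risk ℓ f p +
        (⨆ y : Y, W1 ℓ (((p.map Prod.swap).condKernel y).map f)
          (((q.map Prod.swap).condKernel y).map f)) <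
        b + ε * (a / 2) * (s : ℝ) * ((s : ℝ) + 1) ∧
      (⨆ y : Y, W1 ℓ (((p.map Prod.swap).condKernel y).map f)
        (((q.map Prod.swap).condKernel y).map f)) <
        ε * (a / 2) * (s : ℝ) * ((s : ℝ) + 1) := by
  obtain ⟨Q, r, hQ₀, hQ, hr, hr₁, hq, hstep⟩ := hGS hb
  have hW : ∀ y, W1 ℓ (((p.map Prod.swap).condKernel y).map f)
      (((q.map Prod.swap).condKernel y).map f) < ε * (a / 2) * s * (s + 1) := by
    intro y
    have hν : ∀ i ≤ s, IsProbabilityMeasure ((Q i y).map f) := by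
      intro i hi
      have : IsProbabilityMeasure (Q i y) := by
        rcases i.eq_zero_or_pos with rfl | hi₀
        · rw [hQ₀]; infer_instance
        · exact hQ i (Finset.mem_Icc.mpr ⟨hi₀, hi⟩) y
      exact Measure.isProbabilityMeasure_map hf.aemeasurable
    rw [← hQ₀, hq, Measure.map_finset_sum hf.aemeasurable]
    simp_rw [Measure.map_smul]
    exact W1_lt_of_gradualShift (fun z => hnonneg z.1 z.2) htri hν hr hr₁ fun i hi => hstep i hi y
  obtain ⟨y, hy⟩ := exists_eq_ciSup_of_finite (f := fun y => W1 ℓ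
    (((p.map Prod.swap).condKernel y).map f) (((q.map Prod.swap).condKernel y).map f))
  rw [← hy]
  exact ⟨add_lt_add hb (hW y), hW y⟩

theorem statement16 {X Y : Type*} [MeasurableSpace X] [StandardBorelSpace X] [Nonempty X]
    [MeasurableSpace Y] [Fintype Y] [MeasurableSingletonClass Y] [Nonempty Y]
    (ℓ : Y × Y → ℝ) (hℓmeas : Measurable ℓ)
    (hsymm : ∀ y y' : Y, ℓ (y, y') = ℓ (y', y))
    (hnonneg : ∀ y y' : Y, 0 ≤ ℓ (y, y'))
    (htri : ∀ y₁ y₂ y₃ : Y, ℓ (y₁, y₃) ≤ ℓ (y₁, y₂) + ℓ (y₂, y₃))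
    (hid : ∀ y y' : Y, ℓ (y, y') = 0 ↔ y = y')
    (p q : Measure (X × Y)) [IsProbabilityMeasure p] [IsProbabilityMeasure q]
    (f : X → Y) (hf : Measurable f)
    (a b ε : ℝ) (s : ℕ)
    (hGS : risk ℓ f p < b →
      ∃ (Q : ℕ → Y → Measure X) (r : ℕ → ℝ),
        (∀ y : Y, Q 0 y = (p.map Prod.swap).condKernel y) ∧
        (∀ i ∈ Finset.Icc 1 s, ∀ y : Y, IsProbabilityMeasure (Q i y)) ∧
        (∀ i ∈ Finset.Icc 1 s, 0 ≤ r i ∧ r i ≤ a) ∧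
        (∑ i ∈ Finset.Icc 1 s, r i = 1) ∧
        (∀ y : Y, (q.map Prod.swap).condKernel y =
          ∑ i ∈ Finset.Icc 1 s, ENNReal.ofReal (r i) • Q i y) ∧
        (∀ i ∈ Finset.Icc 1 s, ∀ y : Y,
          W1 ℓ ((Q (i - 1) y).map f) ((Q i y).map f) < ε))
    (hb : risk ℓ f p < b) :
    risk ℓ f p +
        (⨆ y : Y, W1 ℓ (((p.map Prod.swap).condKernel y).map f)
          (((q.map Prod.swap).condKernel y).map f)) <
        b + ε * (a / 2) * (s : ℝ) * ((s : ℝ) + 1) ∧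
      (⨆ y : Y, W1 ℓ (((p.map Prod.swap).condKernel y).map f)
        (((q.map Prod.swap).condKernel y).map f)) <
        ε * (a / 2) * (s : ℝ) * ((s : ℝ) + 1) :=
  statement16_general ℓ hnonneg htri p q f hf a b ε s hGS hb
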